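/- arXiv:gr-qc/9805027 — 3 statements merged into one kernel-verified Lean document; each statement's English description precedes it below -/
import Mathlib

section
/- The map e : ℝ² × (−2,2) → ℝ⁶ defined by e(q₂,q₃,α) = (q₁*(q₂,q₃,α), q₂, q₃, α, ½·α·√(4−α²), α²/2), where q₁*(q₂,q₃,α) = α³ − q₃α − ½·q₂·√(4−α²) + ½·q₂·α²·(4−α²)^(−1/2), is a smooth injective map whose derivative (Fréchet derivative) at every point of its domain is injective; i.e., e is an injective immersion of a 3-dimensional domain into ℝ⁶ ≅ T*ℝ³. -/
/-- The `q₁` coordinate of the Lagrange-submanifold embedding of the toy model. -/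
noncomputable def q₁star (q₂ q₃ α : ℝ) : ℝ :=
  α ^ 3 - q₃ * α - (1 / 2) * q₂ * Real.sqrt (4 - α ^ 2)
    + (1 / 2) * q₂ * α ^ 2 * (Real.sqrt (4 - α ^ 2))⁻¹

/-- The Lagrange-submanifold embedding `e(q₂,q₃,α)` of the toy model, with values in
`T*ℝ³ ≅ ℝ⁶` with coordinates `(q₁,q₂,q₃,p₁,p₂,p₃)`. -/
noncomputable def eMap (x : ℝ × ℝ × ℝ) : ℝ × ℝ × ℝ × ℝ × ℝ × ℝ :=
  (q₁star x.1 x.2.1 x.2.2, x.1, x.2.1,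
    x.2.2, (1 / 2) * x.2.2 * Real.sqrt (4 - x.2.2 ^ 2), x.2.2 ^ 2 / 2)

lemma eMap_contDiffAt {x : ℝ × ℝ × ℝ} (hx : x.2.2 ∈ Set.Ioo (-2 : ℝ) 2) :
    ContDiffAt ℝ (⊤ : ℕ∞) eMap x := by
  have h4 : (0:ℝ) < 4 - x.2.2 ^ 2 := by nlinarith [hx.1, hx.2]
  have hs : Real.sqrt (4 - x.2.2 ^ 2) ≠ 0 := ne_of_gt (Real.sqrt_pos.2 h4)
  have hsub : ContDiffAt ℝ (⊤ : ℕ∞) (fun y : ℝ × ℝ × ℝ => 4 - y.2.2 ^ 2) x := by fun_prop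
  have hsqrt : ContDiffAt ℝ (⊤ : ℕ∞) (fun y : ℝ × ℝ × ℝ => Real.sqrt (4 - y.2.2 ^ 2)) x :=
    (Real.contDiffAt_sqrt (ne_of_gt h4)).comp x hsub
  have hinv : ContDiffAt ℝ (⊤ : ℕ∞) (fun y : ℝ × ℝ × ℝ => (Real.sqrt (4 - y.2.2 ^ 2))⁻¹) x :=
    hsqrt.inv hs
  unfold eMap q₁star
  apply ContDiffAt.prodMk
  · apply ContDiffAt.add
    · apply ContDiffAt.sub
      · fun_prop
      · exact (by fun_prop : ContDiffAt ℝ (⊤ : ℕ∞) (fun y : ℝ×ℝ×ℝ => (1/2) * y.1) x).mul hsqrt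
    · exact (by fun_prop : ContDiffAt ℝ (⊤ : ℕ∞) (fun y : ℝ×ℝ×ℝ => (1/2) * y.1 * y.2.2 ^ 2) x).mul hinv
  apply ContDiffAt.prodMk; · fun_prop
  apply ContDiffAt.prodMk; · fun_prop
  apply ContDiffAt.prodMk; · fun_prop
  apply ContDiffAt.prodMk
  · exact (by fun_prop : ContDiffAt ℝ (⊤ : ℕ∞) (fun y : ℝ×ℝ×ℝ => (1/2) * y.2.2) x).mul hsqrt
  · exact (by fun_prop : ContDiffAt ℝ (⊤ : ℕ∞) (fun y : ℝ×ℝ×ℝ => y.2.2 ^ 2) x).div_const 2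

noncomputable def Pproj : (ℝ × ℝ × ℝ × ℝ × ℝ × ℝ) →L[ℝ] (ℝ × ℝ × ℝ) :=
  ((ContinuousLinearMap.fst ℝ ℝ _).comp (ContinuousLinearMap.snd ℝ ℝ _)).prod
    ((((ContinuousLinearMap.fst ℝ ℝ _).comp (ContinuousLinearMap.snd ℝ ℝ _)).comp
        (ContinuousLinearMap.snd ℝ ℝ _)).prod
      ((((ContinuousLinearMap.fst ℝ ℝ _).comp (ContinuousLinearMap.snd ℝ ℝ _)).comp
          (ContinuousLinearMap.snd ℝ ℝ _)).comp (ContinuousLinearMap.snd ℝ ℝ _)))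

lemma Pproj_eMap : ⇑Pproj ∘ eMap = id := rfl

/-- `e` is a smooth injective map on `ℝ² × (−2,2)` whose Fréchet derivative at every point of
its domain is injective: an injective immersion of a 3-dimensional domain into `ℝ⁶ ≅ T*ℝ³`. -/
theorem eMap_injective_immersion :
    ContDiffOn ℝ (⊤ : ℕ∞) eMap (Set.univ ×ˢ Set.univ ×ˢ Set.Ioo (-2 : ℝ) 2)
    ∧ Set.InjOn eMap (Set.univ ×ˢ Set.univ ×ˢ Set.Ioo (-2 : ℝ) 2)
    ∧ ∀ x ∈ (Set.univ ×ˢ Set.univ ×ˢ Set.Ioo (-2 : ℝ) 2 : Set (ℝ × ℝ × ℝ)),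
        Function.Injective (fderiv ℝ eMap x) := by
  refine ⟨fun x hx => (eMap_contDiffAt hx.2.2).contDiffWithinAt, ?_, ?_⟩
  · intro a _ b _ hab
    have h2 : a.1 = b.1 := congrArg (fun y => y.2.1) hab
    have h3 : a.2.1 = b.2.1 := congrArg (fun y => y.2.2.1) hab
    have h4 : a.2.2 = b.2.2 := congrArg (fun y => y.2.2.2.1) hab
    exact Prod.ext h2 (Prod.ext h3 h4)
  · intro x hx
    have hd : DifferentiableAt ℝ eMap x := (eMap_contDiffAt hx.2.2).differentiableAt (by simp)
    have h1 : Pproj.comp (fderiv ℝ eMap x) = ContinuousLinearMap.id ℝ (ℝ × ℝ × ℝ) := by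
      have := fderiv_comp x Pproj.differentiableAt hd
      rw [Pproj.fderiv] at this
      rw [← this, Pproj_eMap, fderiv_id]
    have h2 : ⇑Pproj ∘ ⇑(fderiv ℝ eMap x) = id := by
      funext v
      have := ContinuousLinearMap.ext_iff.1 h1 v
      simpa using this
    exact Function.Injective.of_comp (f := ⇑Pproj) (h2 ▸ Function.injective_id)
end

section
/- Write e(q₂,q₃,α) = (Q(q₂,q₃,α), P(q₂,q₃,α)) with Q = (q₁*, q₂, q₃) and P = (α, ½·α·√(4−α²), α²/2). Then the pullback by e of the canonical symplectic form ω = Σ_i dq_i ∧ dp_i on ℝ³ × ℝ³ vanishes identically; concretely, for every (q₂,q₃,α) ∈ ℝ² × (−2,2) and all vectors u, v ∈ ℝ³: ⟨DQ(q₂,q₃,α)u, DP(q₂,q₃,α)v⟩ − ⟨DQ(q₂,q₃,α)v, DP(q₂,q₃,α)u⟩ = 0, where ⟨·,·⟩ is the Euclidean inner product on ℝ³ and DQ, DP are the Fréchet derivatives. Hence the image of e is a Lagrange submanifold of (T*ℝ³, ω). -/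
open RealInnerProductSpace

/-- The base-point component `Q(q₂,q₃,α) = (q₁*, q₂, q₃)` of the embedding `e`. -/
noncomputable def Qmap (x : ℝ × ℝ × ℝ) : EuclideanSpace ℝ (Fin 3) :=
  WithLp.toLp 2 ![q₁star x.1 x.2.1 x.2.2, x.1, x.2.1]

/-- The momentum component `P(q₂,q₃,α) = (α, ½α√(4−α²), α²/2)` of the embedding `e`. -/
noncomputable def Pmap (x : ℝ × ℝ × ℝ) : EuclideanSpace ℝ (Fin 3) :=
  WithLp.toLp 2 ![x.2.2, (1 / 2) * x.2.2 * Real.sqrt (4 - x.2.2 ^ 2), x.2.2 ^ 2 / 2]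

/-! The momentum `P` depends on `α` alone, so `DP v = v_α • P'(α)` and the pulled-back form is
`⟪DQ u, P'(α)⟫ v_α - ⟪DQ v, P'(α)⟫ u_α`. The coordinate `q₁*` is chosen so that, with
`p₂(α) = ½ α √(4 - α²)`, `⟪Q(q₂, q₃, β), P'(α)⟫ = β³ + q₂ (p₂'(α) - p₂'(β)) + q₃ (α - β)`;
at `β = α` the fibre coordinates `q₂, q₃` drop out of its differential, which is therefore a
multiple of `dα`, and the form vanishes. -/

open ContinuousLinearMap

section InnerProduct

variable {E F : Type*} [NormedAddCommGroup E] [NormedSpace ℝ E]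
  [NormedAddCommGroup F] [InnerProductSpace ℝ F]

theorem inner_fderiv_sub_inner_fderiv_eq_zero {Q P : E → F} {x : E} {φ : E →L[ℝ] ℝ} {w : F}
    {c : ℝ} (hQ : DifferentiableAt ℝ Q x) (hP : HasFDerivAt P (toSpanSingleton ℝ w ∘L φ) x)
    (hQw : HasFDerivAt (fun y ↦ ⟪Q y, w⟫) (c • φ) x) (u v : E) :
    ⟪fderiv ℝ Q x u, fderiv ℝ P x v⟫ - ⟪fderiv ℝ Q x v, fderiv ℝ P x u⟫ = 0 := by
  have hDQw : ∀ u, ⟪fderiv ℝ Q x u, w⟫ = c * φ u := fun u ↦ by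
    simpa using congrArg (· u) ((hQ.hasFDerivAt.inner ℝ (hasFDerivAt_const w x)).unique hQw)
  rw [hP.fderiv]
  simp only [comp_apply, toSpanSingleton_apply, real_inner_smul_right, hDQw]
  ring

end InnerProduct

theorem hasDerivAt_sqrt_sub_sq {c α : ℝ} (h : α ^ 2 < c) :
    HasDerivAt (fun t ↦ √(c - t ^ 2)) (-α / √(c - α ^ 2)) α := by
  have hc : c - α ^ 2 ≠ 0 := by linarith
  convert ((hasDerivAt_pow 2 α).const_sub c).sqrt hc using 1
  have : √(c - α ^ 2) ≠ 0 := by positivity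
  field_simp
  push_cast
  ring

noncomputable def momentum₂Deriv (α : ℝ) : ℝ :=
  (1 / 2) * √(4 - α ^ 2) - (1 / 2) * α ^ 2 * (√(4 - α ^ 2))⁻¹

theorem hasDerivAt_momentum₂ {α : ℝ} (h : α ^ 2 < 4) :
    HasDerivAt (fun t ↦ (1 / 2) * t * √(4 - t ^ 2)) (momentum₂Deriv α) α := by
  refine (((hasDerivAt_id' α).const_mul (1 / 2)).mul (hasDerivAt_sqrt_sub_sq h)).congr_deriv ?_
  have : √(4 - α ^ 2) ≠ 0 := by positivity
  simp only [momentum₂Deriv]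
  field_simp
  ring

theorem differentiableAt_momentum₂Deriv {α : ℝ} (h : α ^ 2 < 4) :
    DifferentiableAt ℝ momentum₂Deriv α := by
  have : √(4 - α ^ 2) ≠ 0 := by positivity
  unfold momentum₂Deriv
  fun_prop (disch := first | assumption | linarith)

theorem q₁star_eq (q₂ q₃ α : ℝ) : q₁star q₂ q₃ α = α ^ 3 - q₃ * α - q₂ * momentum₂Deriv α := by
  unfold q₁star momentum₂Deriv
  ring

theorem differentiableAt_q₁star {x : ℝ × ℝ × ℝ} (h : x.2.2 ^ 2 < 4) :
    DifferentiableAt ℝ (fun y : ℝ × ℝ × ℝ ↦ q₁star y.1 y.2.1 y.2.2) x := by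
  simp only [q₁star_eq]
  have := (differentiableAt_momentum₂Deriv h).comp x differentiableAt_snd.snd
  fun_prop

noncomputable def momentumCurve (α : ℝ) : EuclideanSpace ℝ (Fin 3) :=
  WithLp.toLp 2 ![α, (1 / 2) * α * √(4 - α ^ 2), α ^ 2 / 2]

noncomputable def momentumVelocity (α : ℝ) : EuclideanSpace ℝ (Fin 3) :=
  WithLp.toLp 2 ![1, momentum₂Deriv α, α]

theorem hasDerivAt_momentumCurve {α : ℝ} (h : α ^ 2 < 4) :
    HasDerivAt momentumCurve (momentumVelocity α) α := by
  have hpi : HasDerivAt (fun t : ℝ ↦ ![t, (1 / 2) * t * √(4 - t ^ 2), t ^ 2 / 2])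
      ![1, momentum₂Deriv α, α] α := by
    rw [hasDerivAt_pi]
    intro i
    fin_cases i
    · simpa using hasDerivAt_id' α
    · simpa using hasDerivAt_momentum₂ h
    · simpa using (hasDerivAt_pow 2 α).div_const 2
  exact (PiLp.hasFDerivAt_toLp 2 _).comp_hasDerivAt α hpi

theorem hasFDerivAt_Pmap {x : ℝ × ℝ × ℝ} (h : x.2.2 ^ 2 < 4) :
    HasFDerivAt Pmap
      (toSpanSingleton ℝ (momentumVelocity x.2.2) ∘L (snd ℝ ℝ ℝ ∘L snd ℝ ℝ (ℝ × ℝ))) x := by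
  change HasFDerivAt (momentumCurve ∘ fun y ↦ y.2.2) _ x
  exact (hasDerivAt_momentumCurve h).hasFDerivAt.comp x hasFDerivAt_snd.snd

theorem differentiableAt_Qmap {x : ℝ × ℝ × ℝ} (h : x.2.2 ^ 2 < 4) :
    DifferentiableAt ℝ Qmap x := by
  rw [differentiableAt_piLp]
  intro i
  fin_cases i
  · simpa [Qmap] using differentiableAt_q₁star h
  · simp [Qmap]
  · simp [Qmap]

theorem inner_Qmap_momentumVelocity (y : ℝ × ℝ × ℝ) (α : ℝ) :
    ⟪Qmap y, momentumVelocity α⟫ =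
      y.2.2 ^ 3 + y.1 * (momentum₂Deriv α - momentum₂Deriv y.2.2) + y.2.1 * (α - y.2.2) := by
  simp only [Qmap, q₁star_eq, momentumVelocity, PiLp.inner_apply, RCLike.inner_apply,
    Real.ringHom_apply, Fin.sum_univ_three, Fin.isValue, Matrix.cons_val_zero, one_mul,
    Matrix.cons_val_one, Matrix.cons_val]
  ring

theorem hasFDerivAt_inner_Qmap_momentumVelocity {x : ℝ × ℝ × ℝ} (h : x.2.2 ^ 2 < 4) :
    ∃ c : ℝ, HasFDerivAt (fun y ↦ ⟪Qmap y, momentumVelocity x.2.2⟫)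
      (c • (snd ℝ ℝ ℝ ∘L snd ℝ ℝ (ℝ × ℝ))) x := by
  simp_rw [inner_Qmap_momentumVelocity]
  have hα : HasFDerivAt (fun y : ℝ × ℝ × ℝ ↦ y.2.2) (snd ℝ ℝ ℝ ∘L snd ℝ ℝ (ℝ × ℝ)) x :=
    hasFDerivAt_snd.snd
  have hg := (differentiableAt_momentum₂Deriv h).hasDerivAt.comp_hasFDerivAt x hα
  refine ⟨3 * x.2.2 ^ 2 - x.1 * deriv momentum₂Deriv x.2.2 - x.2.1,
    (((hα.pow 3).add (hasFDerivAt_fst.mul ((hasFDerivAt_const _ x).sub hg))).add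
    (hasFDerivAt_snd.fst.mul ((hasFDerivAt_const _ x).sub hα))).congr_fderiv ?_⟩
  refine ContinuousLinearMap.ext fun u ↦ ?_
  simp only [Nat.add_one_sub_one, nsmul_eq_mul, Nat.cast_ofNat, zero_sub, smul_neg, Pi.sub_apply,
    Function.comp_apply, sub_self, zero_smul, add_zero, add_apply, smul_apply, comp_apply, coe_snd',
    smul_eq_mul, neg_apply]
  ring

/-- The pullback by `e = (Q,P)` of the canonical symplectic form `ω = Σ dqᵢ ∧ dpᵢ` vanishes:
for every point of `ℝ² × (−2,2)` and all vectors `u,v`,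
`⟨DQ u, DP v⟩ − ⟨DQ v, DP u⟩ = 0`.  Hence the image of `e` is a Lagrange submanifold. -/
theorem pullback_symplectic_form_vanishes :
    ∀ x ∈ (Set.univ ×ˢ Set.univ ×ˢ Set.Ioo (-2 : ℝ) 2 : Set (ℝ × ℝ × ℝ)),
      ∀ u v : ℝ × ℝ × ℝ,
        (inner ℝ (fderiv ℝ Qmap x u) (fderiv ℝ Pmap x v) : ℝ)
          - (inner ℝ (fderiv ℝ Qmap x v) (fderiv ℝ Pmap x u) : ℝ) = 0 := by
  rintro x ⟨-, -, hα⟩ u v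
  have h : x.2.2 ^ 2 < 4 := by nlinarith [hα.1, hα.2]
  obtain ⟨c, hc⟩ := hasFDerivAt_inner_Qmap_momentumVelocity h
  exact inner_fderiv_sub_inner_fderiv_eq_zero (differentiableAt_Qmap h) (hasFDerivAt_Pmap h) hc u v
end

section
/- Let π̄ : ℝ² × (−2,2) → ℝ³ be the Lagrange map π̄(q₂,q₃,α) = (q₁*(q₂,q₃,α), q₂, q₃). Then the Fréchet derivative of π̄ at (q₂,q₃,α) is invertible if and only if −3α² + q₃ + q₂·α·(4−α²)^(−3/2)·(α²−6) ≠ 0. Equivalently, the singular set of the Lagrange map is exactly the set of points with q₃ = 3α² − q₂·α·(4−α²)^(−3/2)·(α²−6). -/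
/-- The Lagrange map of the toy model, `π̄(q₂,q₃,α) = (q₁*(q₂,q₃,α), q₂, q₃)`. -/
noncomputable def pibar (x : ℝ × ℝ × ℝ) : ℝ × ℝ × ℝ :=
  (q₁star x.1 x.2.1 x.2.2, x.1, x.2.1)

/-! Since `π̄` keeps `q₂, q₃` as its last two coordinates, the Jacobian of `π̄` has determinant
`∂q₁*/∂α`; so `dπ̄` is invertible exactly when this partial derivative,
`3α² − q₃ − q₂α(4−α²)^(−3/2)(α²−6)`, does not vanish. -/

theorem LinearMap.bijective_iff_fst_apply_ne_zero {K : Type*} [Field K]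
    (L : K × K × K →ₗ[K] K × K × K) (hL : ∀ v, (L v).2 = (v.1, v.2.1)) :
    Function.Bijective L ↔ (L (0, 0, 1)).1 ≠ 0 := by
  have hL₃ : L (0, 0, 1) = ((L (0, 0, 1)).1, 0, 0) := Prod.ext rfl (hL _)
  rw [Function.Bijective, and_iff_left_of_imp LinearMap.injective_iff_surjective.mp,
    injective_iff_map_eq_zero]
  constructor
  · intro hinj hc
    rw [hc] at hL₃
    simpa using hinj _ hL₃
  · rintro hc ⟨v₁, v₂, v₃⟩ hv
    obtain ⟨rfl, rfl⟩ : v₁ = 0 ∧ v₂ = 0 := by simpa using (hL _).symm.trans congr(($hv).2)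
    have hv₃ : L (0, 0, v₃) = v₃ • L (0, 0, 1) := by rw [← map_smul]; simp
    rw [hv₃, hL₃] at hv
    simpa [hc] using hv

theorem hasDerivAt_q₁star {q₂ q₃ α : ℝ} (hα : α ∈ Set.Ioo (-2 : ℝ) 2) :
    HasDerivAt (q₁star q₂ q₃)
      (3 * α ^ 2 - q₃ - q₂ * α * (Real.sqrt (4 - α ^ 2) ^ 3)⁻¹ * (α ^ 2 - 6)) α := by
  obtain ⟨h1, h2⟩ := hα
  have hpos : 0 < 4 - α ^ 2 := by nlinarith
  set s := Real.sqrt (4 - α ^ 2) with hs_def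
  have hs : 0 < s := Real.sqrt_pos.2 hpos
  have hs2 : s ^ 2 = 4 - α ^ 2 := Real.sq_sqrt hpos.le
  have hsqrt : HasDerivAt (fun t => Real.sqrt (4 - t ^ 2)) (-α / s) α :=
    (((hasDerivAt_pow 2 α).const_sub 4).sqrt hpos.ne').congr_deriv (by field_simp; ring)
  have hq₁ := (((hasDerivAt_pow 3 α).sub ((hasDerivAt_id' α).const_mul q₃)).sub
    (hsqrt.const_mul ((1 / 2) * q₂))).add
    (((hasDerivAt_pow 2 α).const_mul ((1 / 2) * q₂)).mul (hsqrt.inv hs.ne'))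
  refine hq₁.congr_deriv ?_
  simp only [Pi.inv_apply, ← hs_def]
  field_simp
  linear_combination 3 * α * q₂ * hs2

theorem differentiableAt_q₁star_s6 {q₂ q₃ α : ℝ} (hα : α ∈ Set.Ioo (-2 : ℝ) 2) :
    DifferentiableAt ℝ (fun x : ℝ × ℝ × ℝ => q₁star x.1 x.2.1 x.2.2) (q₂, q₃, α) := by
  obtain ⟨h1, h2⟩ := hα
  have hpos : 0 < 4 - α ^ 2 := by nlinarith
  have hs : Real.sqrt (4 - α ^ 2) ≠ 0 := (Real.sqrt_pos.2 hpos).ne'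
  unfold q₁star
  fun_prop (disch := first | exact hs | exact hpos.ne')

theorem fderiv_q₁star_apply_zero_zero_one {q₂ q₃ α : ℝ} (hα : α ∈ Set.Ioo (-2 : ℝ) 2) :
    fderiv ℝ (fun x : ℝ × ℝ × ℝ => q₁star x.1 x.2.1 x.2.2) (q₂, q₃, α) (0, 0, 1)
      = 3 * α ^ 2 - q₃ - q₂ * α * (Real.sqrt (4 - α ^ 2) ^ 3)⁻¹ * (α ^ 2 - 6) := by
  have hline : HasDerivAt (fun t : ℝ => (q₂, q₃, t)) ((0 : ℝ), (0 : ℝ), (1 : ℝ)) α :=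
    (hasDerivAt_const α q₂).prodMk ((hasDerivAt_const α q₃).prodMk (hasDerivAt_id α))
  have hslice := (differentiableAt_q₁star_s6 hα).hasFDerivAt.comp_hasDerivAt α hline
  exact hslice.unique (hasDerivAt_q₁star hα)

theorem fderiv_pibar_apply {q₂ q₃ α : ℝ} (hα : α ∈ Set.Ioo (-2 : ℝ) 2) (v : ℝ × ℝ × ℝ) :
    fderiv ℝ pibar (q₂, q₃, α) v = (fderiv ℝ (fun x : ℝ × ℝ × ℝ => q₁star x.1 x.2.1 x.2.2)
      (q₂, q₃, α) v, v.1, v.2.1) := by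
  have hpibar : HasFDerivAt pibar _ (q₂, q₃, α) := (differentiableAt_q₁star_s6 hα).hasFDerivAt.prodMk
    ((hasFDerivAt_fst (𝕜 := ℝ) (p := (q₂, q₃, α))).prodMk
      (hasFDerivAt_snd (𝕜 := ℝ) (p := (q₂, q₃, α))).fst)
  rw [hpibar.fderiv]
  rfl

/-- The Fréchet derivative of the Lagrange map `π̄` at `(q₂,q₃,α)` (with `α ∈ (−2,2)`) is
invertible iff `−3α² + q₃ + q₂α(4−α²)^(−3/2)(α²−6) ≠ 0`; equivalently, the singular set of
the Lagrange map is exactly `{(q₂,q₃,α) : q₃ = 3α² − q₂α(4−α²)^(−3/2)(α²−6)}`. -/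
theorem pibar_fderiv_bijective_iff (q₂ q₃ α : ℝ) (hα : α ∈ Set.Ioo (-2 : ℝ) 2) :
    (Function.Bijective (fderiv ℝ pibar (q₂, q₃, α))
      ↔ -3 * α ^ 2 + q₃ + q₂ * α * (Real.sqrt (4 - α ^ 2) ^ 3)⁻¹ * (α ^ 2 - 6) ≠ 0)
    ∧ (¬ Function.Bijective (fderiv ℝ pibar (q₂, q₃, α))
      ↔ q₃ = 3 * α ^ 2 - q₂ * α * (Real.sqrt (4 - α ^ 2) ^ 3)⁻¹ * (α ^ 2 - 6)) := by
  have hbij : Function.Bijective (fderiv ℝ pibar (q₂, q₃, α))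
      ↔ 3 * α ^ 2 - q₃ - q₂ * α * (Real.sqrt (4 - α ^ 2) ^ 3)⁻¹ * (α ^ 2 - 6) ≠ 0 := by
    rw [← fderiv_q₁star_apply_zero_zero_one hα]
    refine LinearMap.bijective_iff_fst_apply_ne_zero (fderiv ℝ pibar (q₂, q₃, α)).toLinearMap
      (fun v => by simp [fderiv_pibar_apply hα v]) |>.trans ?_
    simp [fderiv_pibar_apply hα]
  rw [hbij, not_not]
  constructor
  · constructor <;> intro h <;> contrapose! h <;> linarith
  · constructor <;> intro h <;> linarith
end
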